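/- arXiv:math-ph/0601027 — 6 statements merged into one kernel-verified Lean document; each statement's English description precedes it below -/
import Mathlib

section
/- Let (P^N) be a sequence of nonzero orthogonal projections that concentrates at x = (x_k)_{k∈K}. Then for every m ≥ 1 and every finite sequence (k_1, …, k_m) of indices from K, the normalized trace expectations of the (generally noncommuting) monomials converge: lim_{N→∞} tr^N(X^N_{k_1} X^N_{k_2} ⋯ X^N_{k_m} | P^N) = x_{k_1} x_{k_2} ⋯ x_{k_m}. -/
open scoped Matrix Matrix.Norms.L2Operator ComplexOrder

/-- `P` is an orthogonal projection matrix. -/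
def IsProjection {d : ℕ} (P : Matrix (Fin d) (Fin d) ℂ) : Prop :=
  P.IsHermitian ∧ P * P = P

/-- `σ` is a density matrix (a state). -/
def IsDensity {d : ℕ} (σ : Matrix (Fin d) (Fin d) ℂ) : Prop :=
  σ.PosSemidef ∧ σ.trace = 1

/-- Expectation of `A` in the state with density matrix `σ`. -/
noncomputable def expVal {d : ℕ} (σ A : Matrix (Fin d) (Fin d) ℂ) : ℂ :=
  (σ * A).trace

/-- Normalized trace state on the range of the projection `P`:
`tr(A | P) = Tr(P A P) / Tr(P)`. -/
noncomputable def condTr {d : ℕ} (P A : Matrix (Fin d) (Fin d) ℂ) : ℂ :=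
  (P * A * P).trace / P.trace

/-- Total functional calculus on matrices: applies `f` to a Hermitian matrix via the
spectral decomposition and returns `0` on non-Hermitian matrices. -/
noncomputable def fc {d : ℕ} (f : ℝ → ℝ) (A : Matrix (Fin d) (Fin d) ℂ) :
    Matrix (Fin d) (Fin d) ℂ :=
  if h : A.IsHermitian then h.cfc f else 0

/-- The spectral projection of a Hermitian matrix onto the Borel set `S ⊆ ℝ`. -/
noncomputable def specProj {d : ℕ} (S : Set ℝ) (A : Matrix (Fin d) (Fin d) ℂ) :
    Matrix (Fin d) (Fin d) ℂ :=
  fc (S.indicator 1) A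

/-- The von Neumann entropy `−Tr(σ log σ)` (with the convention `0 log 0 = 0`,
which is automatic since `Real.log 0 = 0`). -/
noncomputable def vnEntropy {d : ℕ} (σ : Matrix (Fin d) (Fin d) ℂ) : ℝ :=
  -((σ * fc Real.log σ).trace.re)

/-- The quantum relative entropy `Tr(σ (log σ − log σ₀))` of density matrices. -/
noncomputable def relEntropy {d : ℕ} (σ σ₀ : Matrix (Fin d) (Fin d) ℂ) : ℝ :=
  ((σ * (fc Real.log σ - fc Real.log σ₀)).trace.re)

section Seq
variable (d : ℕ → ℕ) {K : Type*} (X : ∀ N, K → Matrix (Fin (d N)) (Fin (d N)) ℂ)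

/-- The sequence of projections `(P N)` concentrates at `x` (written `P^N →mc x`):
each `P N` is a nonzero orthogonal projection and for every index `k` and every
continuous `F : ℝ → ℝ`, `tr(F(X^N_k) | P^N) → F(x_k)`. -/
def ConcProj (P : ∀ N, Matrix (Fin (d N)) (Fin (d N)) ℂ) (x : K → ℝ) : Prop :=
  (∀ N, IsProjection (P N) ∧ P N ≠ 0) ∧
  ∀ (k : K) (F : ℝ → ℝ), Continuous F →
    Filter.Tendsto (fun N => condTr (P N) (fc F (X N k))) Filter.atTop (nhds (F (x k) : ℂ))

/-- Microcanonical H-function: the supremum over sequences of projections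
concentrating at `x` of `limsup (1/N) log Tr(P^N)` (`⊥ = −∞` if none exists). -/
noncomputable def Hmc (x : K → ℝ) : EReal :=
  sSup { h | ∃ P : ∀ N, Matrix (Fin (d N)) (Fin (d N)) ℂ, ConcProj d X P x ∧
    h = Filter.limsup (fun N : ℕ => (((N : ℝ)⁻¹ * Real.log ((P N).trace.re) : ℝ) : EReal))
      Filter.atTop }

/-- A microcanonical macrostate at `x`: a concentrating sequence of projections
attaining the supremum in `Hmc`. -/
def IsMicroMacrostate (P : ∀ N, Matrix (Fin (d N)) (Fin (d N)) ℂ) (x : K → ℝ) : Prop :=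
  ConcProj d X P x ∧
  (Filter.limsup (fun N : ℕ => (((N : ℝ)⁻¹ * Real.log ((P N).trace.re) : ℝ) : EReal))
      Filter.atTop) = Hmc d X x

/-- The sequence of states given by density matrices `(σ N)` concentrates at `x`
(`ω^N → x`): expectations of all noncommutative monomials in the macroscopic
observables converge to the corresponding products of the values `x_k`. -/
def ConcState (σ : ∀ N, Matrix (Fin (d N)) (Fin (d N)) ℂ) (x : K → ℝ) : Prop :=
  (∀ N, IsDensity (σ N)) ∧
  ∀ L : List K,
    Filter.Tendsto (fun N => expVal (σ N) ((L.map (X N)).prod)) Filter.atTop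
      (nhds (((L.map x).prod : ℝ) : ℂ))

/-- The sequence of states `(σ N)` concentrates in the mean at `x` (`ω^N →1 x`). -/
def ConcMean (σ : ∀ N, Matrix (Fin (d N)) (Fin (d N)) ℂ) (x : K → ℝ) : Prop :=
  (∀ N, IsDensity (σ N)) ∧
  ∀ k : K, Filter.Tendsto (fun N => expVal (σ N) (X N k)) Filter.atTop (nhds (x k : ℂ))

/-- Canonical H-function: supremum of `limsup (1/N) 𝓗(ω^N)` over `ω^N → x`. -/
noncomputable def Hcan (x : K → ℝ) : EReal :=
  sSup { h | ∃ σ : ∀ N, Matrix (Fin (d N)) (Fin (d N)) ℂ, ConcState d X σ x ∧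
    h = Filter.limsup (fun N : ℕ => (((N : ℝ)⁻¹ * vnEntropy (σ N) : ℝ) : EReal)) Filter.atTop }

/-- Canonical H-function in the mean: supremum of `limsup (1/N) 𝓗(ω^N)` over `ω^N →1 x`. -/
noncomputable def Hcan1 (x : K → ℝ) : EReal :=
  sSup { h | ∃ σ : ∀ N, Matrix (Fin (d N)) (Fin (d N)) ℂ, ConcMean d X σ x ∧
    h = Filter.limsup (fun N : ℕ => (((N : ℝ)⁻¹ * vnEntropy (σ N) : ℝ) : EReal)) Filter.atTop }

/-- A canonical macrostate at `x`: a sequence of states concentrating in the mean at `x`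
whose entropy density attains the supremum in `Hcan1`. -/
def IsCanMacrostate (σ : ∀ N, Matrix (Fin (d N)) (Fin (d N)) ℂ) (x : K → ℝ) : Prop :=
  ConcMean d X σ x ∧
  (Filter.limsup (fun N : ℕ => (((N : ℝ)⁻¹ * vnEntropy (σ N) : ℝ) : EReal)) Filter.atTop)
    = Hcan1 d X x

/-- Relative canonical H-function with respect to a reference sequence of faithful
states `ρ`: the infimum of `liminf (1/N) 𝓗(ω^N | ρ^N)` over `ω^N →1 x` (`⊤` if none). -/
noncomputable def Hcan1Rel (ρ : ∀ N, Matrix (Fin (d N)) (Fin (d N)) ℂ) (x : K → ℝ) : EReal :=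
  sInf { h | ∃ σ : ∀ N, Matrix (Fin (d N)) (Fin (d N)) ℂ, ConcMean d X σ x ∧
    h = Filter.liminf (fun N : ℕ => (((N : ℝ)⁻¹ * relEntropy (σ N) (ρ N) : ℝ) : EReal))
      Filter.atTop }

end Seq


/-! The normalized trace `A ↦ tr(A | P)` is a state on the C⋆-algebra of matrices, so the
Cauchy–Schwarz inequality for the GNS inner product of this state gives
`|tr(U B | P)| ≤ tr(U U* | P)^{1/2} ‖B‖`. Concentration applied to `F(t) = (t - x_k)²` gives
`tr((X_k - x_k)² | P^N) → 0`. Writing `X_{k_1} B = (X_{k_1} - x_{k_1}) B + x_{k_1} B`, where `B` is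
the rest of the monomial and is bounded uniformly in `N`, the first term tends to zero and
induction on the length of the monomial finishes the proof. -/

open Filter Topology
open scoped MatrixOrder

namespace PositiveLinearMap

theorem norm_apply_star_mul_le {A : Type*} [NonUnitalCStarAlgebra A] [PartialOrder A]
    [StarOrderedRing A] (f : A →ₚ[ℂ] ℂ) (a b : A) :
    ‖f (star a * b)‖ ≤ √(f (star a * a)).re * √(f (star b * b)).re :=
  norm_inner_le_norm (𝕜 := ℂ) (f.toPreGNS a) (f.toPreGNS b)

variable {A : Type*} [CStarAlgebra A] [PartialOrder A] [StarOrderedRing A] (f : A →ₚ[ℂ] ℂ)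

theorem re_apply_star_mul_self_le (b : A) : (f (star b * b)).re ≤ ‖b‖ ^ 2 * (f 1).re := by
  have h := OrderHomClass.mono f (CStarAlgebra.star_mul_le_algebraMap_norm_sq (a := b))
  rw [Algebra.algebraMap_eq_smul_one, map_smul_of_tower] at h
  simpa only [Complex.real_smul, Complex.re_ofReal_mul] using (Complex.le_def.mp h).1

theorem norm_apply_mul_le (hf : f 1 = 1) (u b : A) :
    ‖f (u * b)‖ ≤ √(f (u * star u)).re * ‖b‖ := by
  have hb : √(f (star b * b)).re ≤ ‖b‖ := by
    refine Real.sqrt_le_iff.mpr ⟨norm_nonneg b, ?_⟩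
    simpa [hf] using f.re_apply_star_mul_self_le b
  have h := f.norm_apply_star_mul_le (star u) b
  rw [star_star] at h
  exact h.trans (by gcongr)

end PositiveLinearMap

theorem CStarRing.norm_one_le (E : Type*) [NormedRing E] [StarRing E] [CStarRing E] :
    ‖(1 : E)‖ ≤ 1 := by
  nontriviality E
  exact CStarRing.norm_one.le

section SequenceOfStates

variable {ι : Type*} {l : Filter ι} {A : ι → Type*} [∀ i, CStarAlgebra (A i)]
  {K : Type*} {X : ∀ i, K → A i}

theorem exists_norm_list_prod_le (hX : ∀ k, ∃ C, ∀ i, ‖X i k‖ ≤ C) (L : List K) :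
    ∃ C, ∀ i, ‖(L.map (X i)).prod‖ ≤ C := by
  induction L with
  | nil => exact ⟨1, fun i => by simpa using CStarRing.norm_one_le (A i)⟩
  | cons k L ih =>
    obtain ⟨C₁, hC₁⟩ := hX k
    obtain ⟨C₂, hC₂⟩ := ih
    refine ⟨C₁ * C₂, fun i => ?_⟩
    rw [List.map_cons, List.prod_cons]
    exact (norm_mul_le _ _).trans
      (mul_le_mul (hC₁ i) (hC₂ i) (norm_nonneg _) ((norm_nonneg _).trans (hC₁ i)))

variable [∀ i, PartialOrder (A i)] [∀ i, StarOrderedRing (A i)] {f : ∀ i, A i →ₚ[ℂ] ℂ}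

theorem tendsto_apply_mul_of_tendsto_apply_mul_star (hf : ∀ i, f i 1 = 1) {u b : ∀ i, A i}
    (hu : Tendsto (fun i => f i (u i * star (u i))) l (𝓝 0)) {C : ℝ} (hb : ∀ i, ‖b i‖ ≤ C) :
    Tendsto (fun i => f i (u i * b i)) l (𝓝 0) := by
  have hbound : Tendsto (fun i => √(f i (u i * star (u i))).re * C) l (𝓝 0) := by
    simpa using (((Complex.continuous_re.tendsto 0).comp hu).sqrt).mul_const C
  refine squeeze_zero_norm (fun i => ?_) hbound
  exact ((f i).norm_apply_mul_le (hf i) _ _).trans (by gcongr; exact hb i)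

theorem tendsto_apply_list_prod (hf : ∀ i, f i 1 = 1) {x : K → ℂ}
    (hX : ∀ k, ∃ C, ∀ i, ‖X i k‖ ≤ C)
    (hvar : ∀ k, Tendsto (fun i => f i ((X i k - algebraMap ℂ (A i) (x k)) *
      star (X i k - algebraMap ℂ (A i) (x k)))) l (𝓝 0))
    (L : List K) : Tendsto (fun i => f i (L.map (X i)).prod) l (𝓝 (L.map x).prod) := by
  induction L with
  | nil => simpa [hf] using tendsto_const_nhds
  | cons k L ih =>
    obtain ⟨C, hC⟩ := exists_norm_list_prod_le hX L
    have hsplit : ∀ i, f i (X i k * (L.map (X i)).prod) =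
        f i ((X i k - algebraMap ℂ (A i) (x k)) * (L.map (X i)).prod) +
          x k * f i (L.map (X i)).prod := by
      intro i
      rw [sub_mul, map_sub, Algebra.algebraMap_eq_smul_one, smul_one_mul, map_smul, smul_eq_mul,
        sub_add_cancel]
    simp only [List.map_cons, List.prod_cons, hsplit]
    simpa using (tendsto_apply_mul_of_tendsto_apply_mul_star hf (hvar k) hC).add
      (ih.const_mul (x k))

end SequenceOfStates

namespace IsProjection

variable {n : ℕ} {P : Matrix (Fin n) (Fin n) ℂ}

theorem posSemidef (hP : IsProjection P) : P.PosSemidef := by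
  simpa [hP.1.eq, hP.2] using Matrix.posSemidef_conjTranspose_mul_self P

theorem trace_ne_zero (hP : IsProjection P) (hP0 : P ≠ 0) : P.trace ≠ 0 :=
  hP.posSemidef.trace_eq_zero_iff.not.mpr hP0

noncomputable def condTrPositiveLinearMap (hP : IsProjection P) :
    Matrix (Fin n) (Fin n) ℂ →ₚ[ℂ] ℂ :=
  .mk₀
    { toFun := condTr P
      map_add' := fun A B => by
        simp only [condTr, Matrix.mul_add, Matrix.add_mul, Matrix.trace_add, add_div]
      map_smul' := fun c A => by simp [condTr, mul_div_assoc] }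
    fun A hA => by
      have h := (Matrix.nonneg_iff_posSemidef.mp hA).conjTranspose_mul_mul_same P
      rw [hP.1.eq] at h
      exact div_nonneg h.trace_nonneg hP.posSemidef.trace_nonneg

theorem condTrPositiveLinearMap_apply (hP : IsProjection P) (A : Matrix (Fin n) (Fin n) ℂ) :
    hP.condTrPositiveLinearMap A = condTr P A :=
  rfl

theorem condTr_one (hP : IsProjection P) (hP0 : P ≠ 0) : condTr P 1 = 1 := by
  rw [condTr, Matrix.mul_one, hP.2, div_self (hP.trace_ne_zero hP0)]

end IsProjection

theorem Matrix.IsHermitian.fc_sub_sq {n : ℕ} {A : Matrix (Fin n) (Fin n) ℂ}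
    (hA : A.IsHermitian) (c : ℝ) :
    fc (fun t => (t - c) ^ 2) A = (A - algebraMap ℂ _ c) * star (A - algebraMap ℂ _ c) := by
  have hsa : IsSelfAdjoint (A - algebraMap ℂ _ c) :=
    hA.isSelfAdjoint.sub (.algebraMap _ (Complex.conj_ofReal c))
  rw [fc, dif_pos hA, ← hA.cfc_eq, cfc_pow _ 2 A, cfc_sub _ _ A, cfc_id' ℝ A, cfc_const c A,
    hsa.star_eq, sq, IsScalarTower.algebraMap_apply ℝ ℂ]
  rfl

/-- If a sequence of nonzero orthogonal projections concentrates at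
`x`, then the normalized trace expectations of all (generally noncommuting) monomials
`X^N_{k_1} ⋯ X^N_{k_m}` (`m ≥ 1`) converge to `x_{k_1} ⋯ x_{k_m}`. -/
theorem monomial_concentration
    (d : ℕ → ℕ) {K : Type*} (X : ∀ N, K → Matrix (Fin (d N)) (Fin (d N)) ℂ)
    (hherm : ∀ N k, (X N k).IsHermitian)
    (hbdd : ∀ k, ∃ C : ℝ, ∀ N, ‖X N k‖ ≤ C)
    (P : ∀ N, Matrix (Fin (d N)) (Fin (d N)) ℂ) (x : K → ℝ)
    (hP : ConcProj d X P x) :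
    ∀ (m : ℕ), 1 ≤ m → ∀ k : Fin m → K,
      Filter.Tendsto
        (fun N => condTr (P N) ((List.ofFn fun i => X N (k i)).prod))
        Filter.atTop (nhds ((∏ i, x (k i) : ℝ) : ℂ)) := by
  obtain ⟨hPproj, hPconc⟩ := hP
  intro m _ k
  have hvar : ∀ j, Tendsto (fun N => (hPproj N).1.condTrPositiveLinearMap
      ((X N j - algebraMap ℂ _ (x j)) * star (X N j - algebraMap ℂ _ (x j)))) atTop (𝓝 0) := by
    intro j
    have h := hPconc j (fun t => (t - x j) ^ 2) (by fun_prop)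
    rw [sub_self, zero_pow two_ne_zero, Complex.ofReal_zero] at h
    simpa only [IsProjection.condTrPositiveLinearMap_apply, (hherm _ j).fc_sub_sq] using h
  have h := tendsto_apply_list_prod (fun N => (hPproj N).1.condTr_one (hPproj N).2) hbdd hvar
    (List.ofFn k)
  rw [Complex.ofReal_prod]
  simpa only [IsProjection.condTrPositiveLinearMap_apply, List.map_ofFn, List.prod_ofFn,
    Function.comp_def] using h
end

section
/- Let (ω^N) be a sequence of states on d_N × d_N complex matrices, let (Y^N) be matrices with sup_N ‖Y^N‖ < ∞ and ω^N(Y^N) → y, and let (X^N) be Hermitian matrices with ω^N(X^N) → x and ω^N((X^N)²) → x². Then ω^N(Y^N X^N) → y·x. -/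
open scoped Matrix Matrix.Norms.L2Operator ComplexOrder

/-! Put `Z = X - x`. Then `ω(YX) = ω(YZ) + x ω(Y)`, and Cauchy–Schwarz for the GNS semi-inner
product `⟨a, b⟩ = ω(a⋆b)` gives `|ω(YZ)|² ≤ ω(YY⋆) ω(Z⋆Z) ≤ ‖Y‖² ω(Z²)`, while
`ω(Z²) = ω(X²) - 2x ω(X) + x² → 0`. -/

open Filter Topology
open scoped MatrixOrder

namespace PositiveLinearMap

variable {A : Type*} [CStarAlgebra A] [PartialOrder A] [StarOrderedRing A] (f : A →ₚ[ℂ] ℂ)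

theorem norm_apply_star_mul_sq_le (a b : A) :
    ‖f (star a * b)‖ ^ 2 ≤ (f (star a * a)).re * (f (star b * b)).re := by
  have h := norm_inner_le_norm (𝕜 := ℂ) (f.toPreGNS a) (f.toPreGNS b)
  rw [preGNS_inner_def, preGNS_norm_def, preGNS_norm_def] at h
  calc ‖f (star a * b)‖ ^ 2 ≤ (√(f (star a * a)).re * √(f (star b * b)).re) ^ 2 := by
        gcongr; exact h
    _ = _ := by
      rw [mul_pow, Real.sq_sqrt (f.map_nonneg (star_mul_self_nonneg a)).1,
        Real.sq_sqrt (f.map_nonneg (star_mul_self_nonneg b)).1]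

theorem re_apply_mul_star_le (a : A) : (f (a * star a)).re ≤ ‖a‖ ^ 2 * (f 1).re := by
  have h := OrderHomClass.mono f (CStarAlgebra.mul_star_le_algebraMap_norm_sq (a := a))
  rw [Algebra.algebraMap_eq_smul_one, map_smul_of_tower, Complex.real_smul] at h
  simpa [← Complex.ofReal_pow] using (Complex.le_def.mp h).1

theorem norm_apply_mul_sq_le (a b : A) :
    ‖f (a * b)‖ ^ 2 ≤ ‖a‖ ^ 2 * (f 1).re * (f (star b * b)).re := by
  have h := f.norm_apply_star_mul_sq_le (star a) b
  rw [star_star] at h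
  have hb := (f.map_nonneg (star_mul_self_nonneg b)).1
  exact h.trans (by gcongr; exact f.re_apply_mul_star_le a)

end PositiveLinearMap

section LinearFunctional

variable {A F : Type*} [Ring A] [Algebra ℂ A] [FunLike F A ℂ] [LinearMapClass F ℂ A ℂ] (f : F)

theorem map_mul_eq_map_mul_sub_smul_one_add (a b : A) (c : ℂ) :
    f (a * b) = f (a * (b - c • 1)) + c * f a := by
  rw [mul_sub, mul_smul_comm, mul_one, map_sub, map_smul, smul_eq_mul]
  ring

theorem map_star_sub_smul_one_mul_sub_smul_one [StarRing A] [StarModule ℂ A] {b : A}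
    (hb : IsSelfAdjoint b) (x : ℝ) :
    f (star (b - (x : ℂ) • 1) * (b - (x : ℂ) • 1)) = f (b * b) - 2 * x * f b + x ^ 2 * f 1 := by
  rw [star_sub, hb.star_eq, star_smul, star_one, Complex.star_def, Complex.conj_ofReal]
  simp only [sub_mul, mul_sub, smul_mul_assoc, mul_smul_comm, one_mul, mul_one, map_sub,
    map_smul, smul_eq_mul]
  ring

end LinearFunctional

section Tendsto

variable {ι : Type*} {l : Filter ι} {A : ι → Type*} [∀ i, CStarAlgebra (A i)]
  [∀ i, PartialOrder (A i)] [∀ i, StarOrderedRing (A i)] (f : ∀ i, A i →ₚ[ℂ] ℂ)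

theorem tendsto_apply_mul_zero_of_tendsto_apply_star_mul_self (hf : ∀ i, f i 1 = 1)
    {a b : ∀ i, A i} {C : ℝ} (ha : ∀ i, ‖a i‖ ≤ C)
    (hb : Tendsto (fun i => f i (star (b i) * b i)) l (𝓝 0)) :
    Tendsto (fun i => f i (a i * b i)) l (𝓝 0) := by
  rw [tendsto_zero_iff_norm_tendsto_zero]
  have hbound (i : ι) : ‖f i (a i * b i)‖ ≤ √(C ^ 2 * (f i (star (b i) * b i)).re) := by
    refine Real.le_sqrt_of_sq_le ((f i).norm_apply_mul_sq_le (a i) (b i) |>.trans ?_)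
    rw [hf i, Complex.one_re, mul_one]
    have := ((f i).map_nonneg (star_mul_self_nonneg (b i))).1
    gcongr
    exact ha i
  have hlim : Tendsto (fun i => √(C ^ 2 * (f i (star (b i) * b i)).re)) l (𝓝 0) := by
    simpa using ((Complex.continuous_re.tendsto 0).comp hb).const_mul (C ^ 2) |>.sqrt
  exact squeeze_zero (fun _ => norm_nonneg _) hbound hlim

theorem tendsto_apply_mul_of_tendsto_apply_mul_self (hf : ∀ i, f i 1 = 1)
    {a b : ∀ i, A i} (ha : ∃ C, ∀ i, ‖a i‖ ≤ C) {y : ℂ}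
    (hy : Tendsto (fun i => f i (a i)) l (𝓝 y)) (hb : ∀ i, IsSelfAdjoint (b i)) {x : ℝ}
    (hx : Tendsto (fun i => f i (b i)) l (𝓝 x))
    (hx2 : Tendsto (fun i => f i (b i * b i)) l (𝓝 (x ^ 2 : ℝ))) :
    Tendsto (fun i => f i (a i * b i)) l (𝓝 (y * x)) := by
  obtain ⟨C, hC⟩ := ha
  have hvar :
      Tendsto (fun i => f i (star (b i - (x : ℂ) • 1) * (b i - (x : ℂ) • 1))) l (𝓝 0) := by
    simp only [map_star_sub_smul_one_mul_sub_smul_one _ (hb _), hf]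
    convert (hx2.sub (hx.const_mul (2 * (x : ℂ)))).add_const ((x : ℂ) ^ 2 * 1) using 2
    push_cast
    ring
  have hcross := tendsto_apply_mul_zero_of_tendsto_apply_star_mul_self f hf hC hvar
  have h := hcross.add (hy.const_mul (x : ℂ))
  rw [zero_add, mul_comm] at h
  exact h.congr fun i => (map_mul_eq_map_mul_sub_smul_one_add (f i) _ _ _).symm

end Tendsto

namespace Matrix

variable {n : Type*} [Fintype n] [DecidableEq n]

theorem PosSemidef.trace_mul_nonneg {σ B : Matrix n n ℂ} (hσ : σ.PosSemidef) (hB : B.PosSemidef) :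
    0 ≤ (σ * B).trace := by
  obtain ⟨s, rfl⟩ := CStarAlgebra.nonneg_iff_eq_star_mul_self.mp hσ.nonneg
  rw [trace_mul_cycle, trace_mul_cycle]
  exact (hB.mul_mul_conjTranspose_same s).trace_nonneg

noncomputable def traceMulPositiveLinearMap (σ : Matrix n n ℂ) (hσ : σ.PosSemidef) :
    Matrix n n ℂ →ₚ[ℂ] ℂ :=
  .mk₀ (traceLinearMap n ℂ ℂ ∘ₗ LinearMap.mulLeft ℂ σ) fun _ hB =>
    hσ.trace_mul_nonneg (nonneg_iff_posSemidef.mp hB)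

@[simp]
theorem traceMulPositiveLinearMap_apply (σ : Matrix n n ℂ) (hσ : σ.PosSemidef) (B : Matrix n n ℂ) :
    traceMulPositiveLinearMap σ hσ B = (σ * B).trace :=
  rfl

end Matrix

/-- The induction step: if `ω^N(Y^N) → y` with `(Y^N)` uniformly
bounded, and `ω^N(X^N) → x`, `ω^N((X^N)²) → x²` for Hermitian `X^N`, then
`ω^N(Y^N X^N) → y·x`. -/
theorem product_concentration_step
    (d : ℕ → ℕ) (σ Y X : ∀ N, Matrix (Fin (d N)) (Fin (d N)) ℂ)
    (hσ : ∀ N, IsDensity (σ N))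
    (hYbdd : ∃ C : ℝ, ∀ N, ‖Y N‖ ≤ C)
    (y : ℂ) (hY : Filter.Tendsto (fun N => expVal (σ N) (Y N)) Filter.atTop (nhds y))
    (hXherm : ∀ N, (X N).IsHermitian) (x : ℝ)
    (hX1 : Filter.Tendsto (fun N => expVal (σ N) (X N)) Filter.atTop (nhds (x : ℂ)))
    (hX2 : Filter.Tendsto (fun N => expVal (σ N) (X N * X N)) Filter.atTop
      (nhds ((x ^ 2 : ℝ) : ℂ))) :
    Filter.Tendsto (fun N => expVal (σ N) (Y N * X N)) Filter.atTop (nhds (y * x)) := by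
  have hstate (N : ℕ) : (σ N).traceMulPositiveLinearMap (hσ N).1 1 = 1 := by
    simpa using (hσ N).2
  exact tendsto_apply_mul_of_tendsto_apply_mul_self _ hstate hYbdd hY hXherm hX1 hX2
end

section
/- For each N ∈ ℕ and real numbers t ≥ s ≥ 0, let τ^N_{t,s} be the *-automorphism of d_N × d_N complex matrices given by conjugation with a unitary, and assume τ^N_{t,s} = τ^N_{t,u} ∘ τ^N_{u,s} for all t ≥ u ≥ s ≥ 0. Let Ω = {x ∈ ℝ^K : H^mc(x) ≥ 0} and let φ_{t,s} : Ω → Ω (t ≥ s ≥ 0) satisfy the semigroup property φ_{t,u} ∘ φ_{u,s} = φ_{t,s} for t ≥ u ≥ s ≥ 0. Assume the autonomy condition: for every x ∈ Ω there is a microcanonical macrostate (P^N(x)) at x such that for every finite index sequence (k_1, …, k_m) and all t ≥ s ≥ 0, lim_{N→∞} tr^N( τ^N_{t,s}(X^N_{k_1} ⋯ X^N_{k_m}) | P^N(x) ) = (φ_{t,s}x)_{k_1} ⋯ (φ_{t,s}x)_{k_m}. Then for every x ∈ Ω the function t ↦ H^mc(φ_{t,0} x) is nondecreasing on t ≥ 0.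 -/
open scoped Matrix Matrix.Norms.L2Operator ComplexOrder

/-!
Let `y = φ_{t₁,0} x`, let `P^N` be an autonomous macrostate at `y` and `V^N = U^N_{t₂,t₁}`.
The rotated projections `Q^N = V^N* P^N V^N` have the same traces as `P^N`, and
`tr(A | Q^N) = tr(V^N A V^N* | P^N)`, so by autonomy `tr((X^N_k)^m | Q^N) → z_k^m` for
`z = φ_{t₂,t₁} y = φ_{t₂,0} x`. The states `tr(· | Q^N)` are contractive and the spectra of the
`X^N_k` stay in a fixed interval, so Weierstrass approximation upgrades these moment limits to
`Q^N →mc z`. Hence `H^mc(y) = limsup (1/N) log Tr Q^N ≤ H^mc(z)`.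
-/

open Filter Topology Polynomial

lemma Filter.Tendsto.of_forall_dist_le {ι α : Type*} [PseudoMetricSpace α] {l : Filter ι}
    {f : ι → α} {a : α}
    (h : ∀ ε > 0, ∃ (g : ι → α) (b : α), Tendsto g l (𝓝 b) ∧ (∀ i, dist (f i) (g i) ≤ ε) ∧
      dist b a ≤ ε) :
    Tendsto f l (𝓝 a) := by
  refine Metric.tendsto_nhds.mpr fun ε hε => ?_
  obtain ⟨g, b, hg, hfg, hba⟩ := h (ε / 3) (by positivity)
  filter_upwards [Metric.tendsto_nhds.mp hg (ε / 3) (by positivity)] with i hi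
  calc dist (f i) a ≤ dist (f i) (g i) + dist (g i) b + dist b a := dist_triangle4 _ _ _ _
    _ < ε := by linarith [hfg i]

lemma Matrix.norm_trace_conjTranspose_mul_mul_le {n m : Type*} [Fintype n] [DecidableEq n]
    [Fintype m] (R : Matrix n m ℂ) (B : Matrix n n ℂ) :
    ‖(Rᴴ * B * R).trace‖ ≤ ‖B‖ * (Rᴴ * R).trace.re := by
  let r : m → EuclideanSpace ℂ n := fun i => WithLp.toLp 2 fun j => R j i
  have hdiag : ∀ i, (Rᴴ * B * R) i i = inner ℂ (r i) (WithLp.toLp 2 (B *ᵥ (r i).ofLp)) := by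
    intro i
    rw [EuclideanSpace.inner_toLp_toLp, Matrix.mul_assoc, Matrix.mul_apply', dotProduct_comm]
    rfl
  have hnorm : ∀ i, ‖r i‖ ^ 2 = ((Rᴴ * R) i i).re := by
    intro i
    rw [← inner_self_eq_norm_sq (𝕜 := ℂ), EuclideanSpace.inner_toLp_toLp, Matrix.mul_apply',
      dotProduct_comm]
    rfl
  calc ‖(Rᴴ * B * R).trace‖ ≤ ∑ i, ‖(Rᴴ * B * R) i i‖ := norm_sum_le _ _
    _ ≤ ∑ i, ‖r i‖ * (‖B‖ * ‖r i‖) := by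
        refine Finset.sum_le_sum fun i _ => ?_
        rw [hdiag i]
        exact (norm_inner_le_norm _ _).trans (by gcongr; exact Matrix.l2_opNorm_mulVec B (r i))
    _ = ‖B‖ * (Rᴴ * R).trace.re := by
        simp only [Matrix.trace, Matrix.diag, Complex.re_sum, ← hnorm, Finset.mul_sum]
        exact Finset.sum_congr rfl fun i _ => by ring

lemma Matrix.abs_le_of_mem_spectrum {n : Type*} [Fintype n] [DecidableEq n] {A : Matrix n n ℂ}
    {C : ℝ} (hA : ‖A‖ ≤ C) {x : ℝ} (hx : x ∈ spectrum ℝ A) : |x| ≤ C := by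
  rcases isEmpty_or_nonempty n with hn | hn
  · simp [spectrum.of_subsingleton] at hx
  · have : NormOneClass (Matrix n n ℂ) := ⟨CStarRing.norm_one⟩
    exact (spectrum.norm_le_norm_of_mem hx).trans hA

namespace IsProjection

variable {d : ℕ} {P : Matrix (Fin d) (Fin d) ℂ}

open scoped ComplexOrder in
lemma trace_pos (hP : IsProjection P) (h0 : P ≠ 0) : 0 < P.trace := by
  have hP' : Pᴴ * P = P := by rw [hP.1.eq, hP.2]
  rw [← hP']
  exact (Matrix.posSemidef_conjTranspose_mul_self P).trace_nonneg.lt_of_ne'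
    (Matrix.trace_conjTranspose_mul_self_eq_zero_iff.not.mpr h0)

lemma ofReal_trace_re (hP : IsProjection P) (h0 : P ≠ 0) : ((P.trace.re : ℝ) : ℂ) = P.trace :=
  Complex.ext rfl (Complex.pos_iff.mp (hP.trace_pos h0)).2

lemma norm_condTr_le (hP : IsProjection P) (h0 : P ≠ 0) (B : Matrix (Fin d) (Fin d) ℂ) :
    ‖condTr P B‖ ≤ ‖B‖ := by
  have htr : 0 < P.trace.re := (Complex.pos_iff.mp (hP.trace_pos h0)).1
  rw [condTr, ← hP.ofReal_trace_re h0, norm_div, Complex.norm_real, Real.norm_of_nonneg htr.le,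
    div_le_iff₀ htr]
  simpa only [hP.1.eq, hP.2] using Matrix.norm_trace_conjTranspose_mul_mul_le P B

end IsProjection

section condTr

variable {d : ℕ}

lemma condTr_sub (P A B : Matrix (Fin d) (Fin d) ℂ) :
    condTr P (A - B) = condTr P A - condTr P B := by
  simp only [condTr, Matrix.mul_sub, Matrix.sub_mul, Matrix.trace_sub, sub_div]

lemma condTr_aeval (P A : Matrix (Fin d) (Fin d) ℂ) (p : ℝ[X]) :
    condTr P (aeval A p) = ∑ i ∈ Finset.range (p.natDegree + 1), p.coeff i • condTr P (A ^ i) := by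
  simp only [condTr, aeval_eq_sum_range, Finset.mul_sum, Finset.sum_mul, Matrix.trace_sum,
    Finset.sum_div, Matrix.mul_smul, Matrix.smul_mul, Matrix.trace_smul, smul_div_assoc]

lemma fc_eq_cfc {A : Matrix (Fin d) (Fin d) ℂ} (hA : A.IsHermitian) (f : ℝ → ℝ) :
    fc f A = cfc f A := by
  rw [fc, dif_pos hA, hA.cfc_eq]

lemma norm_fc_sub_fc_le {A : Matrix (Fin d) (Fin d) ℂ} (hA : A.IsHermitian) {C ε : ℝ}
    (hAC : ‖A‖ ≤ C) (hε : 0 ≤ ε) {f g : ℝ → ℝ} (hf : Continuous f) (hg : Continuous g)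
    (hfg : ∀ x ∈ Set.Icc (-C) C, |f x - g x| ≤ ε) :
    ‖fc f A - fc g A‖ ≤ ε := by
  have := hA.isSelfAdjoint
  rw [fc_eq_cfc hA, fc_eq_cfc hA, ← cfc_sub f g A]
  exact norm_cfc_le hε fun x hx => hfg x (abs_le.mp (Matrix.abs_le_of_mem_spectrum hAC hx))

end condTr

lemma tendsto_condTr_fc_of_tendsto_condTr_pow {d : ℕ → ℕ}
    {A P : ∀ N, Matrix (Fin (d N)) (Fin (d N)) ℂ} (hA : ∀ N, (A N).IsHermitian) {C : ℝ}
    (hAC : ∀ N, ‖A N‖ ≤ C) (hP : ∀ N, IsProjection (P N) ∧ P N ≠ 0) {z : ℝ}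
    (hpow : ∀ m : ℕ, Tendsto (fun N => condTr (P N) (A N ^ m)) atTop (𝓝 ((z ^ m : ℝ) : ℂ)))
    {F : ℝ → ℝ} (hF : Continuous F) :
    Tendsto (fun N => condTr (P N) (fc F (A N))) atTop (𝓝 ((F z : ℝ) : ℂ)) := by
  have hzC : z ∈ Set.Icc (-C) C := by
    have h1 : Tendsto (fun N => ‖condTr (P N) (A N)‖) atTop (𝓝 |z|) := by
      simpa only [pow_one, Complex.norm_real, Real.norm_eq_abs] using (hpow 1).norm
    exact abs_le.mp <| le_of_tendsto' h1 fun N =>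
      ((hP N).1.norm_condTr_le (hP N).2 (A N)).trans (hAC N)
  have hpoly : ∀ p : ℝ[X], Tendsto (fun N => condTr (P N) (fc (eval · p) (A N))) atTop
      (𝓝 ((p.eval z : ℝ) : ℂ)) := by
    intro p
    have hfc : ∀ N, condTr (P N) (fc (eval · p) (A N))
        = ∑ i ∈ Finset.range (p.natDegree + 1), p.coeff i • condTr (P N) (A N ^ i) := fun N => by
      rw [fc_eq_cfc (hA N), cfc_polynomial p (A N) (hA N).isSelfAdjoint, condTr_aeval]
    have hlim : ((p.eval z : ℝ) : ℂ)
        = ∑ i ∈ Finset.range (p.natDegree + 1), p.coeff i • ((z ^ i : ℝ) : ℂ) := by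
      simp [eval_eq_sum_range, Complex.real_smul]
    simpa only [hfc, hlim] using tendsto_finsetSum _ fun i _ => (hpow i).const_smul (p.coeff i)
  refine Tendsto.of_forall_dist_le fun ε hε => ?_
  obtain ⟨p, hp⟩ := exists_polynomial_near_of_continuousOn (-C) C F hF.continuousOn ε hε
  refine ⟨_, _, hpoly p, fun N => ?_, ?_⟩
  · rw [dist_eq_norm, ← condTr_sub]
    refine ((hP N).1.norm_condTr_le (hP N).2 _).trans <|
      norm_fc_sub_fc_le (hA N) (hAC N) hε.le hF p.continuous fun x hx => ?_
    rw [abs_sub_comm]; exact (hp x hx).le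
  · rw [dist_eq_norm, ← Complex.ofReal_sub, Complex.norm_real]
    exact (hp z hzC).le

section unitaryConj

variable {d : ℕ} {V : Matrix (Fin d) (Fin d) ℂ}

lemma Matrix.trace_conjTranspose_mul_mul_of_mem_unitaryGroup {n : Type*} [Fintype n]
    [DecidableEq n] {V : Matrix n n ℂ} (hV : V ∈ Matrix.unitaryGroup n ℂ) (A : Matrix n n ℂ) :
    (Vᴴ * A * V).trace = A.trace := by
  rw [Matrix.trace_mul_cycle, ← Matrix.star_eq_conjTranspose,
    Matrix.mem_unitaryGroup_iff.mp hV, one_mul]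

lemma IsProjection.conj_unitary {P : Matrix (Fin d) (Fin d) ℂ} (hP : IsProjection P)
    (hV : V ∈ Matrix.unitaryGroup (Fin d) ℂ) : IsProjection (Vᴴ * P * V) := by
  have hVV : V * Vᴴ = 1 := Matrix.mem_unitaryGroup_iff.mp hV
  refine ⟨?_, ?_⟩
  · simp only [Matrix.IsHermitian, Matrix.conjTranspose_mul, Matrix.conjTranspose_conjTranspose,
      hP.1.eq, Matrix.mul_assoc]
  · calc Vᴴ * P * V * (Vᴴ * P * V) = Vᴴ * P * (V * Vᴴ) * P * V := by noncomm_ring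
      _ = Vᴴ * (P * P) * V := by rw [hVV]; noncomm_ring
      _ = Vᴴ * P * V := by rw [hP.2]

lemma condTr_conj_unitary (P : Matrix (Fin d) (Fin d) ℂ) (hV : V ∈ Matrix.unitaryGroup (Fin d) ℂ)
    (A : Matrix (Fin d) (Fin d) ℂ) : condTr (Vᴴ * P * V) A = condTr P (V * A * Vᴴ) := by
  have hnum : Vᴴ * P * V * A * (Vᴴ * P * V) = Vᴴ * (P * (V * A * Vᴴ) * P) * V := by noncomm_ring
  rw [condTr, condTr, hnum, Matrix.trace_conjTranspose_mul_mul_of_mem_unitaryGroup hV,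
    Matrix.trace_conjTranspose_mul_mul_of_mem_unitaryGroup hV]

end unitaryConj

section Hmc

variable {d : ℕ → ℕ} {K : Type*} {X : ∀ N, K → Matrix (Fin (d N)) (Fin (d N)) ℂ}

lemma limsup_le_Hmc {P : ∀ N, Matrix (Fin (d N)) (Fin (d N)) ℂ} {x : K → ℝ}
    (hP : ConcProj d X P x) :
    limsup (fun N : ℕ => (((N : ℝ)⁻¹ * Real.log ((P N).trace.re) : ℝ) : EReal)) atTop ≤
      Hmc d X x :=
  le_sSup ⟨P, hP, rfl⟩

lemma concProj_of_tendsto_condTr_pow (hX : ∀ N k, (X N k).IsHermitian)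
    (hbdd : ∀ k, ∃ C : ℝ, ∀ N, ‖X N k‖ ≤ C) {P : ∀ N, Matrix (Fin (d N)) (Fin (d N)) ℂ}
    (hP : ∀ N, IsProjection (P N) ∧ P N ≠ 0) {x : K → ℝ}
    (hpow : ∀ k (m : ℕ), Tendsto (fun N => condTr (P N) (X N k ^ m)) atTop
      (𝓝 ((x k ^ m : ℝ) : ℂ))) :
    ConcProj d X P x := by
  refine ⟨hP, fun k F hF => ?_⟩
  obtain ⟨C, hC⟩ := hbdd k
  exact tendsto_condTr_fc_of_tendsto_condTr_pow (fun N => hX N k) hC hP (hpow k) hF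

lemma Hmc_le_Hmc_of_conj_unitary (hX : ∀ N k, (X N k).IsHermitian)
    (hbdd : ∀ k, ∃ C : ℝ, ∀ N, ‖X N k‖ ≤ C) {P V : ∀ N, Matrix (Fin (d N)) (Fin (d N)) ℂ}
    {y z : K → ℝ} (hP : IsMicroMacrostate d X P y)
    (hV : ∀ N, V N ∈ Matrix.unitaryGroup (Fin (d N)) ℂ)
    (hpow : ∀ k (m : ℕ), Tendsto (fun N => condTr (P N) (V N * X N k ^ m * (V N)ᴴ)) atTop
      (𝓝 ((z k ^ m : ℝ) : ℂ))) :
    Hmc d X y ≤ Hmc d X z := by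
  let Q N := (V N)ᴴ * P N * V N
  have hQ : ∀ N, IsProjection (Q N) ∧ Q N ≠ 0 := fun N => by
    obtain ⟨hPN, hPN0⟩ := hP.1.1 N
    refine ⟨hPN.conj_unitary (hV N), fun hQ0 => (hPN.trace_pos hPN0).ne' ?_⟩
    rw [← Matrix.trace_conjTranspose_mul_mul_of_mem_unitaryGroup (hV N),
      show (V N)ᴴ * P N * V N = 0 from hQ0, Matrix.trace_zero]
  have hQconc : ConcProj d X Q z := concProj_of_tendsto_condTr_pow hX hbdd hQ fun k m => by
    simpa only [Q, condTr_conj_unitary _ (hV _)] using hpow k m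
  calc Hmc d X y = limsup (fun N : ℕ => (((N : ℝ)⁻¹ * Real.log ((Q N).trace.re) : ℝ) : EReal))
        atTop := by
        simp only [Q, Matrix.trace_conjTranspose_mul_mul_of_mem_unitaryGroup (hV _), hP.2]
    _ ≤ Hmc d X z := limsup_le_Hmc hQconc

end Hmc

theorem H_theorem_microcanonical_general
    (d : ℕ → ℕ) {K : Type*} (X : ∀ N, K → Matrix (Fin (d N)) (Fin (d N)) ℂ)
    (hherm : ∀ N k, (X N k).IsHermitian)
    (hbdd : ∀ k, ∃ C : ℝ, ∀ N, ‖X N k‖ ≤ C)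
    -- the microscopic dynamics: conjugation with unitaries `U N t s`
    (U : ∀ N, ℝ → ℝ → Matrix (Fin (d N)) (Fin (d N)) ℂ)
    (hU : ∀ N, ∀ t s : ℝ, U N t s ∈ Matrix.unitaryGroup (Fin (d N)) ℂ)
    -- the macroscopic dynamics `φ`, mapping `Ω` to `Ω`
    (φ : ℝ → ℝ → (K → ℝ) → (K → ℝ))
    (hφΩ : ∀ t s : ℝ, 0 ≤ s → s ≤ t → ∀ x : K → ℝ, 0 ≤ Hmc d X x → 0 ≤ Hmc d X (φ t s x))
    -- semigroup property
    (hsemi : ∀ s u t : ℝ, 0 ≤ s → s ≤ u → u ≤ t → ∀ x : K → ℝ, 0 ≤ Hmc d X x →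
      φ t u (φ u s x) = φ t s x)
    -- autonomy condition
    (hauto : ∀ x : K → ℝ, 0 ≤ Hmc d X x →
      ∃ P : ∀ N, Matrix (Fin (d N)) (Fin (d N)) ℂ, IsMicroMacrostate d X P x ∧
        ∀ t s : ℝ, 0 ≤ s → s ≤ t → ∀ (m : ℕ) (k : Fin m → K),
          Filter.Tendsto
            (fun N => condTr (P N)
              (U N t s * (List.ofFn fun i => X N (k i)).prod * (U N t s)ᴴ))
            Filter.atTop (nhds ((∏ i, φ t s x (k i) : ℝ) : ℂ))) :
    ∀ x : K → ℝ, 0 ≤ Hmc d X x → ∀ t₁ t₂ : ℝ, 0 ≤ t₁ → t₁ ≤ t₂ →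
      Hmc d X (φ t₁ 0 x) ≤ Hmc d X (φ t₂ 0 x) := by
  intro x hx t₁ t₂ ht₁ ht₁₂
  obtain ⟨P, hP, hPauto⟩ := hauto _ (hφΩ t₁ 0 le_rfl ht₁ x hx)
  have hpow : ∀ k (m : ℕ), Tendsto
      (fun N => condTr (P N) (U N t₂ t₁ * X N k ^ m * (U N t₂ t₁)ᴴ)) atTop
      (𝓝 ((φ t₂ t₁ (φ t₁ 0 x) k ^ m : ℝ) : ℂ)) := fun k m => by
    simpa only [List.ofFn_const, List.prod_replicate, Finset.prod_const, Finset.card_univ,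
      Fintype.card_fin] using hPauto t₂ t₁ ht₁ ht₁₂ m fun _ => k
  rw [← hsemi 0 t₁ t₂ le_rfl ht₁ ht₁₂ x hx]
  exact Hmc_le_Hmc_of_conj_unitary hherm hbdd hP (fun N => hU N t₂ t₁) hpow

/-- H-theorem in the microcanonical set-up: if the unitary
microscopic dynamics induces (via autonomy on microcanonical macrostates) a
macroscopic dynamics `φ` on `Ω = {x : H^mc(x) ≥ 0}` satisfying the semigroup
property, then `t ↦ H^mc(φ_{t,0} x)` is nondecreasing on `t ≥ 0`. -/
theorem H_theorem_microcanonical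
    (d : ℕ → ℕ) {K : Type*} (X : ∀ N, K → Matrix (Fin (d N)) (Fin (d N)) ℂ)
    (hherm : ∀ N k, (X N k).IsHermitian)
    (hbdd : ∀ k, ∃ C : ℝ, ∀ N, ‖X N k‖ ≤ C)
    -- the microscopic dynamics: conjugation with unitaries `U N t s`
    (U : ∀ N, ℝ → ℝ → Matrix (Fin (d N)) (Fin (d N)) ℂ)
    (hU : ∀ N, ∀ t s : ℝ, U N t s ∈ Matrix.unitaryGroup (Fin (d N)) ℂ)
    (hUcomp : ∀ N, ∀ s u t : ℝ, 0 ≤ s → s ≤ u → u ≤ t →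
      ∀ A : Matrix (Fin (d N)) (Fin (d N)) ℂ,
        U N t s * A * (U N t s)ᴴ = U N t u * (U N u s * A * (U N u s)ᴴ) * (U N t u)ᴴ)
    -- the macroscopic dynamics `φ`, mapping `Ω` to `Ω`
    (φ : ℝ → ℝ → (K → ℝ) → (K → ℝ))
    (hφΩ : ∀ t s : ℝ, 0 ≤ s → s ≤ t → ∀ x : K → ℝ, 0 ≤ Hmc d X x → 0 ≤ Hmc d X (φ t s x))
    -- semigroup property
    (hsemi : ∀ s u t : ℝ, 0 ≤ s → s ≤ u → u ≤ t → ∀ x : K → ℝ, 0 ≤ Hmc d X x →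
      φ t u (φ u s x) = φ t s x)
    -- autonomy condition
    (hauto : ∀ x : K → ℝ, 0 ≤ Hmc d X x →
      ∃ P : ∀ N, Matrix (Fin (d N)) (Fin (d N)) ℂ, IsMicroMacrostate d X P x ∧
        ∀ t s : ℝ, 0 ≤ s → s ≤ t → ∀ (m : ℕ) (k : Fin m → K),
          Filter.Tendsto
            (fun N => condTr (P N)
              (U N t s * (List.ofFn fun i => X N (k i)).prod * (U N t s)ᴴ))
            Filter.atTop (nhds ((∏ i, φ t s x (k i) : ℝ) : ℂ))) :
    ∀ x : K → ℝ, 0 ≤ Hmc d X x → ∀ t₁ t₂ : ℝ, 0 ≤ t₁ → t₁ ≤ t₂ →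
      Hmc d X (φ t₁ 0 x) ≤ Hmc d X (φ t₂ 0 x) :=
  H_theorem_microcanonical_general d X hherm hbdd U hU φ hφΩ hsemi hauto
end

section
/- For each N ∈ ℕ and real t ≥ s ≥ 0 let τ^N_{t,s} be a linear map on d_N × d_N complex matrices such that: τ^N_{t,s} = τ^N_{t,u} ∘ τ^N_{u,s} for t ≥ u ≥ s ≥ 0; for every state ω the functional ω ∘ τ^N_{t,s} is again a state; a fixed sequence of faithful states (ρ^N) satisfies ρ^N ∘ τ^N_{t,s} = ρ^N; and the relative entropy contracts, 𝓗(ω ∘ τ^N_{t,s} | ρ ∘ τ^N_{t,s}) ≤ 𝓗(ω | ρ) for all states ω, ρ (as holds for completely positive maps). Let Ω_1(ρ) = {x : H^can_1(x | ρ) < ∞} and let φ_{t,s} : Ω_1(ρ) → Ω_1(ρ) satisfy φ_{t,u} ∘ φ_{u,s} = φ_{t,s} for t ≥ u ≥ s ≥ 0. Assume: for every x ∈ Ω_1(ρ) there is a sequence of states (ω^N) with ω^N →1 x and liminf_N (1/N)𝓗(ω^N | ρ^N) = H^can_1(x | ρ), such that for all t ≥ s ≥ 0 and k ∈ K, lim_{N→∞}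 (ω^N ∘ τ^N_{t,s})(X^N_k) = (φ_{t,s} x)_k. Then for every x ∈ Ω_1(ρ) the function t ↦ H^can_1(φ_{t,0} x | ρ) is nonincreasing on t ≥ 0. -/
open scoped Matrix Matrix.Norms.L2Operator ComplexOrder

/-!
An entropy-contracting dynamics that leaves the reference state invariant pushes a relative
canonical macrostate at `y` forward to a sequence of states that concentrates in the mean at the
evolved point `φ_{t,s} y`, and does not increase its relative entropy.  Hence that evolved
sequence is a competitor in the infimum defining `H^can_1(φ_{t,s} y | ρ)`, giving
`H^can_1(φ_{t,s} y | ρ) ≤ H^can_1(y | ρ)`; the semigroup law `φ_{t₂,0} = φ_{t₂,t₁} ∘ φ_{t₁,0}`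
turns this into monotonicity in time.
-/

open Filter

section RelativeCanonical

variable {d : ℕ → ℕ} {K : Type*} {X : ∀ N, K → Matrix (Fin (d N)) (Fin (d N)) ℂ}
  {ρ : ∀ N, Matrix (Fin (d N)) (Fin (d N)) ℂ}

theorem relEntropy_le_of_invariant {n : ℕ}
    {T : Matrix (Fin n) (Fin n) ℂ →ₗ[ℂ] Matrix (Fin n) (Fin n) ℂ}
    {σ σ' ρ₀ : Matrix (Fin n) (Fin n) ℂ}
    (hcontract : ∀ σ σ₀ σ' σ₀', IsDensity σ → IsDensity σ₀ → IsDensity σ' → IsDensity σ₀' →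
      (∀ A, expVal σ' A = expVal σ (T A)) → (∀ A, expVal σ₀' A = expVal σ₀ (T A)) →
      relEntropy σ' σ₀' ≤ relEntropy σ σ₀)
    (hρ₀ : IsDensity ρ₀) (hρ₀inv : ∀ A, expVal ρ₀ (T A) = expVal ρ₀ A)
    (hσ : IsDensity σ) (hσ' : IsDensity σ') (hσσ' : ∀ A, expVal σ' A = expVal σ (T A)) :
    relEntropy σ' ρ₀ ≤ relEntropy σ ρ₀ :=
  hcontract σ ρ₀ σ' ρ₀ hσ hρ₀ hσ' hρ₀ hσσ' fun A => (hρ₀inv A).symm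

theorem Hcan1Rel_le_liminf {σ : ∀ N, Matrix (Fin (d N)) (Fin (d N)) ℂ} {x : K → ℝ}
    (hσ : ConcMean d X σ x) :
    Hcan1Rel d X ρ x ≤
      liminf (fun N : ℕ => (((N : ℝ)⁻¹ * relEntropy (σ N) (ρ N) : ℝ) : EReal)) atTop :=
  sInf_le ⟨σ, hσ, rfl⟩

theorem Hcan1Rel_le_liminf_of_relEntropy_le {σ σ' : ∀ N, Matrix (Fin (d N)) (Fin (d N)) ℂ}
    {x' : K → ℝ} (hσ' : ConcMean d X σ' x')
    (hle : ∀ N, relEntropy (σ' N) (ρ N) ≤ relEntropy (σ N) (ρ N)) :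
    Hcan1Rel d X ρ x' ≤
      liminf (fun N : ℕ => (((N : ℝ)⁻¹ * relEntropy (σ N) (ρ N) : ℝ) : EReal)) atTop := by
  refine (Hcan1Rel_le_liminf hσ').trans (liminf_le_liminf (Eventually.of_forall fun N => ?_))
  exact_mod_cast mul_le_mul_of_nonneg_left (hle N) (by positivity)

theorem Hcan1Rel_le_of_macrostate_map
    (T : ∀ N, Matrix (Fin (d N)) (Fin (d N)) ℂ →ₗ[ℂ] Matrix (Fin (d N)) (Fin (d N)) ℂ)
    (hstate : ∀ N σ, IsDensity σ → ∃ σ', IsDensity σ' ∧ ∀ A, expVal σ' A = expVal σ (T N A))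
    (hcontract : ∀ N σ σ', IsDensity σ → IsDensity σ' →
      (∀ A, expVal σ' A = expVal σ (T N A)) → relEntropy σ' (ρ N) ≤ relEntropy σ (ρ N))
    {y y' : K → ℝ} {σ : ∀ N, Matrix (Fin (d N)) (Fin (d N)) ℂ} (hσ : ConcMean d X σ y)
    (hσmin : liminf (fun N : ℕ => (((N : ℝ)⁻¹ * relEntropy (σ N) (ρ N) : ℝ) : EReal)) atTop
      = Hcan1Rel d X ρ y)
    (hσT : ∀ k, Tendsto (fun N => expVal (σ N) (T N (X N k))) atTop (nhds (y' k : ℂ))) :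
    Hcan1Rel d X ρ y' ≤ Hcan1Rel d X ρ y := by
  choose σ' hσ'dens hσ'exp using fun N => hstate N (σ N) (hσ.1 N)
  have hσ'conc : ConcMean d X σ' y' :=
    ⟨hσ'dens, fun k => by simpa only [hσ'exp] using hσT k⟩
  rw [← hσmin]
  exact Hcan1Rel_le_liminf_of_relEntropy_le hσ'conc fun N =>
    hcontract N (σ N) (σ' N) (hσ.1 N) (hσ'dens N) (hσ'exp N)

end RelativeCanonical

theorem H_theorem_canonical_general
    (d : ℕ → ℕ) {K : Type*} (X : ∀ N, K → Matrix (Fin (d N)) (Fin (d N)) ℂ)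
    (τ : ∀ N, ℝ → ℝ →
      Matrix (Fin (d N)) (Fin (d N)) ℂ →ₗ[ℂ] Matrix (Fin (d N)) (Fin (d N)) ℂ)
    -- ω ∘ τ_{t,s} is again a state
    (hstate : ∀ N, ∀ t s : ℝ, 0 ≤ s → s ≤ t → ∀ σ, IsDensity σ →
      ∃ σ', IsDensity σ' ∧ ∀ A, expVal σ' A = expVal σ (τ N t s A))
    -- the faithful invariant reference states ρ^N
    (ρ : ∀ N, Matrix (Fin (d N)) (Fin (d N)) ℂ)
    (hρ : ∀ N, IsDensity (ρ N) ∧ (ρ N).PosDef)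
    (hρinv : ∀ N, ∀ t s : ℝ, 0 ≤ s → s ≤ t →
      ∀ A, expVal (ρ N) (τ N t s A) = expVal (ρ N) A)
    -- contraction of the relative entropy
    (hcontract : ∀ N, ∀ t s : ℝ, 0 ≤ s → s ≤ t →
      ∀ σ σ₀ σ' σ₀', IsDensity σ → IsDensity σ₀ → IsDensity σ' → IsDensity σ₀' →
        (∀ A, expVal σ' A = expVal σ (τ N t s A)) →
        (∀ A, expVal σ₀' A = expVal σ₀ (τ N t s A)) →
        relEntropy σ' σ₀' ≤ relEntropy σ σ₀)
    -- macroscopic dynamics on Ω₁(ρ)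
    (φ : ℝ → ℝ → (K → ℝ) → (K → ℝ))
    (hφΩ : ∀ t s : ℝ, 0 ≤ s → s ≤ t → ∀ x : K → ℝ,
      Hcan1Rel d X ρ x < ⊤ → Hcan1Rel d X ρ (φ t s x) < ⊤)
    -- semigroup property
    (hsemi : ∀ s u t : ℝ, 0 ≤ s → s ≤ u → u ≤ t → ∀ x : K → ℝ, Hcan1Rel d X ρ x < ⊤ →
      φ t u (φ u s x) = φ t s x)
    -- autonomy in the mean along a relative canonical macrostate
    (hauto : ∀ x : K → ℝ, Hcan1Rel d X ρ x < ⊤ →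
      ∃ σ : ∀ N, Matrix (Fin (d N)) (Fin (d N)) ℂ, ConcMean d X σ x ∧
        Filter.liminf
          (fun N : ℕ => (((N : ℝ)⁻¹ * relEntropy (σ N) (ρ N) : ℝ) : EReal)) Filter.atTop
          = Hcan1Rel d X ρ x ∧
        ∀ t s : ℝ, 0 ≤ s → s ≤ t → ∀ k : K,
          Filter.Tendsto (fun N => expVal (σ N) (τ N t s (X N k))) Filter.atTop
            (nhds (φ t s x k : ℂ))) :
    ∀ x : K → ℝ, Hcan1Rel d X ρ x < ⊤ → ∀ t₁ t₂ : ℝ, 0 ≤ t₁ → t₁ ≤ t₂ →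
      Hcan1Rel d X ρ (φ t₂ 0 x) ≤ Hcan1Rel d X ρ (φ t₁ 0 x) := by
  intro x hx t₁ t₂ ht₁ ht₁₂
  obtain ⟨σ, hσ, hσmin, hσauto⟩ := hauto (φ t₁ 0 x) (hφΩ t₁ 0 le_rfl ht₁ x hx)
  rw [← hsemi 0 t₁ t₂ le_rfl ht₁ ht₁₂ x hx]
  exact Hcan1Rel_le_of_macrostate_map (fun N => τ N t₂ t₁)
    (fun N => hstate N t₂ t₁ ht₁ ht₁₂)
    (fun N _ _ hσ hσ' hσσ' => relEntropy_le_of_invariant (hcontract N t₂ t₁ ht₁ ht₁₂)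
      (hρ N).1 (hρinv N t₂ t₁ ht₁ ht₁₂) hσ hσ' hσσ')
    hσ hσmin (hσauto t₂ t₁ ht₁ ht₁₂)

/-- H-theorem in the canonical set-up: for a family of
state-preserving, relative-entropy contracting maps `τ^N_{t,s}` leaving a faithful
reference state `ρ^N` invariant, if the macroscopic dynamics `φ` on
`Ω₁(ρ) = {x : H^can_1(x|ρ) < ∞}` is autonomous in the mean and satisfies the
semigroup property, then `t ↦ H^can_1(φ_{t,0}x | ρ)` is nonincreasing on `t ≥ 0`. -/
theorem H_theorem_canonical
    (d : ℕ → ℕ) {K : Type*} (X : ∀ N, K → Matrix (Fin (d N)) (Fin (d N)) ℂ)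
    (hherm : ∀ N k, (X N k).IsHermitian)
    (hbdd : ∀ k, ∃ C : ℝ, ∀ N, ‖X N k‖ ≤ C)
    (τ : ∀ N, ℝ → ℝ →
      Matrix (Fin (d N)) (Fin (d N)) ℂ →ₗ[ℂ] Matrix (Fin (d N)) (Fin (d N)) ℂ)
    -- composition law τ_{t,s} = τ_{t,u} ∘ τ_{u,s}
    (hcomp : ∀ N, ∀ s u t : ℝ, 0 ≤ s → s ≤ u → u ≤ t →
      ∀ A, τ N t s A = τ N t u (τ N u s A))
    -- ω ∘ τ_{t,s} is again a state
    (hstate : ∀ N, ∀ t s : ℝ, 0 ≤ s → s ≤ t → ∀ σ, IsDensity σ →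
      ∃ σ', IsDensity σ' ∧ ∀ A, expVal σ' A = expVal σ (τ N t s A))
    -- the faithful invariant reference states ρ^N
    (ρ : ∀ N, Matrix (Fin (d N)) (Fin (d N)) ℂ)
    (hρ : ∀ N, IsDensity (ρ N) ∧ (ρ N).PosDef)
    (hρinv : ∀ N, ∀ t s : ℝ, 0 ≤ s → s ≤ t →
      ∀ A, expVal (ρ N) (τ N t s A) = expVal (ρ N) A)
    -- contraction of the relative entropy
    (hcontract : ∀ N, ∀ t s : ℝ, 0 ≤ s → s ≤ t →
      ∀ σ σ₀ σ' σ₀', IsDensity σ → IsDensity σ₀ → IsDensity σ' → IsDensity σ₀' →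
        (∀ A, expVal σ' A = expVal σ (τ N t s A)) →
        (∀ A, expVal σ₀' A = expVal σ₀ (τ N t s A)) →
        relEntropy σ' σ₀' ≤ relEntropy σ σ₀)
    -- macroscopic dynamics on Ω₁(ρ)
    (φ : ℝ → ℝ → (K → ℝ) → (K → ℝ))
    (hφΩ : ∀ t s : ℝ, 0 ≤ s → s ≤ t → ∀ x : K → ℝ,
      Hcan1Rel d X ρ x < ⊤ → Hcan1Rel d X ρ (φ t s x) < ⊤)
    -- semigroup property
    (hsemi : ∀ s u t : ℝ, 0 ≤ s → s ≤ u → u ≤ t → ∀ x : K → ℝ, Hcan1Rel d X ρ x < ⊤ →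
      φ t u (φ u s x) = φ t s x)
    -- autonomy in the mean along a relative canonical macrostate
    (hauto : ∀ x : K → ℝ, Hcan1Rel d X ρ x < ⊤ →
      ∃ σ : ∀ N, Matrix (Fin (d N)) (Fin (d N)) ℂ, ConcMean d X σ x ∧
        Filter.liminf
          (fun N : ℕ => (((N : ℝ)⁻¹ * relEntropy (σ N) (ρ N) : ℝ) : EReal)) Filter.atTop
          = Hcan1Rel d X ρ x ∧
        ∀ t s : ℝ, 0 ≤ s → s ≤ t → ∀ k : K,
          Filter.Tendsto (fun N => expVal (σ N) (τ N t s (X N k))) Filter.atTop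
            (nhds (φ t s x k : ℂ))) :
    ∀ x : K → ℝ, Hcan1Rel d X ρ x < ⊤ → ∀ t₁ t₂ : ℝ, 0 ≤ t₁ → t₁ ≤ t₂ →
      Hcan1Rel d X ρ (φ t₂ 0 x) ≤ Hcan1Rel d X ρ (φ t₁ 0 x) :=
  H_theorem_canonical_general d X τ hstate ρ hρ hρinv hcontract φ hφΩ hsemi hauto
end

section
/- Let (X^N) be Hermitian matrices on ℂ^{d_N} with sup_N ‖X^N‖ < ∞ and (ω^N) states. Assume there is an open interval I ∋ 0 such that ψ(t) = lim_{N→∞} (1/N) log ω^N(e^{tN X^N}) exists for every t ∈ I, and that ψ is differentiable at 0 with ψ'(0) = x. Then for every δ > 0 there exist C > 0 and N_0 such that ω^N(Q_{X^N}(ℝ ∖ (x − δ, x + δ))) ≤ e^{−CN} for all N > N_0. -/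
open scoped Matrix Matrix.Norms.L2Operator ComplexOrder

/-! The eigenvalues `λᵢ` of `Xᴺ`, weighted by `ωᴺ(uᵢuᵢ*)` for the eigenvectors `uᵢ`, form the
spectral distribution, and `ωᴺ(e^{sXᴺ})` is its moment generating function. As `ψ 0 = 0` and
`ψ'(0) = x`, some small `t > 0` in `I` has `ψ t < t(x + δ/2)` and `ψ(-t) < t(δ/2 - x)`. The
Chernoff bound `1_{ℝ∖(a,b)}(λ) ≤ e^{s(λ-b)} + e^{s(a-λ)}` with `s = tN` then bounds the weight
outside `(x - δ, x + δ)` by two terms that are eventually at most `e^{-Ntδ/2}`. -/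

open Real Filter Topology

namespace Matrix.IsHermitian

variable {d : ℕ} {A : Matrix (Fin d) (Fin d) ℂ} (hA : A.IsHermitian)

noncomputable def spectralWeight (σ : Matrix (Fin d) (Fin d) ℂ) (i : Fin d) : ℝ :=
  ((star (hA.eigenvectorUnitary : Matrix (Fin d) (Fin d) ℂ) * σ *
    (hA.eigenvectorUnitary : Matrix (Fin d) (Fin d) ℂ)) i i).re

lemma spectralWeight_nonneg {σ : Matrix (Fin d) (Fin d) ℂ} (hσ : σ.PosSemidef) (i : Fin d) :
    0 ≤ hA.spectralWeight σ i := by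
  have h := (hσ.conjTranspose_mul_mul_same
    (hA.eigenvectorUnitary : Matrix (Fin d) (Fin d) ℂ)).diag_nonneg (i := i)
  exact (Complex.le_def.mp h).1

lemma expVal_cfc_re (σ : Matrix (Fin d) (Fin d) ℂ) (f : ℝ → ℝ) :
    (expVal σ (hA.cfc f)).re = ∑ i, f (hA.eigenvalues i) * hA.spectralWeight σ i := by
  rw [expVal, Matrix.IsHermitian.cfc, Unitary.conjStarAlgAut_apply, ← mul_assoc,
    Matrix.trace_mul_cycle, ← mul_assoc, Matrix.trace, Complex.re_sum]
  refine Finset.sum_congr rfl fun i _ => ?_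
  simp [spectralWeight, Matrix.mul_diagonal, mul_comm]

lemma exp_smul_eq_cfc (c : ℝ) :
    NormedSpace.exp (c • A) = hA.cfc (fun r => Real.exp (c * r)) := by
  rw [← hA.cfc_eq,
    ← CFC.real_exp_eq_normedSpace_exp ((IsSelfAdjoint.all c).smul hA.isSelfAdjoint),
    ← cfc_comp_smul c Real.exp A]
  rfl

end Matrix.IsHermitian

lemma indicator_compl_Ioo_le_exp_add_exp {a b s : ℝ} (hs : 0 ≤ s) (l : ℝ) :
    (Set.Ioo a b)ᶜ.indicator 1 l ≤ exp (s * (l - b)) + exp (s * (a - l)) := by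
  by_cases hl : l ∈ Set.Ioo a b
  · rw [Set.indicator_of_notMem (Set.notMem_compl_iff.mpr hl)]
    positivity
  · rw [Set.indicator_of_mem hl, Pi.one_apply]
    rcases not_and_or.mp hl with hal | hlb
    · have : 1 ≤ exp (s * (a - l)) := one_le_exp (mul_nonneg hs (by linarith [not_lt.mp hal]))
      linarith [exp_pos (s * (l - b))]
    · have : 1 ≤ exp (s * (l - b)) := one_le_exp (mul_nonneg hs (by linarith [not_lt.mp hlb]))
      linarith [exp_pos (s * (a - l))]

lemma expVal_specProj_compl_Ioo_le {d : ℕ} {σ A : Matrix (Fin d) (Fin d) ℂ}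
    (hσ : σ.PosSemidef) (hA : A.IsHermitian) {s : ℝ} (hs : 0 ≤ s) (a b : ℝ) :
    (expVal σ (specProj (Set.Ioo a b)ᶜ A)).re ≤
      exp (-(s * b)) * (expVal σ (NormedSpace.exp (s • A))).re +
        exp (s * a) * (expVal σ (NormedSpace.exp ((-s) • A))).re := by
  rw [specProj, fc, dif_pos hA, hA.exp_smul_eq_cfc, hA.exp_smul_eq_cfc, hA.expVal_cfc_re,
    hA.expVal_cfc_re, hA.expVal_cfc_re, Finset.mul_sum, Finset.mul_sum, ← Finset.sum_add_distrib]
  refine Finset.sum_le_sum fun i _ => ?_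
  calc _ ≤ (exp (s * (hA.eigenvalues i - b)) + exp (s * (a - hA.eigenvalues i))) *
        hA.spectralWeight σ i :=
      mul_le_mul_of_nonneg_right (indicator_compl_Ioo_le_exp_add_exp hs _)
        (hA.spectralWeight_nonneg hσ i)
    _ = _ := by
      rw [add_mul, ← mul_assoc, ← mul_assoc, ← exp_add, ← exp_add]
      ring_nf

lemma le_exp_mul_of_inv_mul_log_lt {E N c : ℝ} (hN : 0 < N) (h : N⁻¹ * log E < c) :
    E ≤ exp (N * c) := by
  rcases le_or_gt E 0 with hE | hE
  · exact hE.trans (exp_pos _).le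
  · rw [← exp_log hE]
    exact exp_le_exp.mpr ((inv_mul_lt_iff₀ hN).mp h).le

lemma HasDerivAt.eventually_lt_add_mul {f : ℝ → ℝ} {f' r a : ℝ} (hf : HasDerivAt f f' a)
    (hr : f' < r) : ∀ᶠ t in 𝓝[>] a, f t < f a + (t - a) * r := by
  have hslope := hf.hasDerivWithinAt.limsup_slope_le' (s := Set.Ioi a) (lt_irrefl a) hr
  filter_upwards [hslope, self_mem_nhdsWithin] with t ht hta
  have hta : 0 < t - a := sub_pos.mpr hta
  rw [slope_def_field, div_lt_iff₀ hta] at ht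
  linarith

lemma HasDerivAt.exists_pos_lt_of_mem_nhds_zero {f : ℝ → ℝ} {f' η : ℝ} {I : Set ℝ}
    (hf : HasDerivAt f f' 0) (hI : I ∈ 𝓝 0) (hη : 0 < η) :
    ∃ t > 0, t ∈ I ∧ -t ∈ I ∧ f t < f 0 + t * (f' + η) ∧ f (-t) < f 0 + t * (η - f') := by
  have hI_sym : ∀ᶠ t in 𝓝[>] (0 : ℝ), t ∈ I ∧ -t ∈ I :=
    nhdsWithin_le_nhds <| Filter.Eventually.and hI <|
      (continuous_neg.tendsto' 0 0 neg_zero).eventually hI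
  have hright := hf.eventually_lt_add_mul (r := f' + η) (by linarith)
  have hleft := (hf.comp_of_eq 0 (hasDerivAt_neg 0) neg_zero.symm).eventually_lt_add_mul
    (r := η - f') (by linarith)
  obtain ⟨t, ⟨htI, hmtI⟩, hft, hfmt, ht⟩ :=
    (hI_sym.and (hright.and (hleft.and self_mem_nhdsWithin))).exists
  simp only [Function.comp_apply, neg_zero, sub_zero] at hft hfmt
  exact ⟨t, ht, htI, hmtI, hft, hfmt⟩

lemma eventually_two_mul_exp_le {c : ℝ} (hc : 0 < c) :
    ∀ᶠ N : ℕ in atTop, 2 * exp (-(2 * c) * N) ≤ exp (-c * N) := by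
  have hlarge : ∀ᶠ N : ℕ in atTop, log 2 ≤ c * N :=
    (tendsto_natCast_atTop_atTop.const_mul_atTop hc).eventually_ge_atTop _
  filter_upwards [hlarge] with N hN
  calc 2 * exp (-(2 * c) * N) ≤ exp (c * N) * exp (-(2 * c) * N) := by
        gcongr
        rwa [← exp_log two_pos, exp_le_exp]
    _ = exp (-c * N) := by rw [← exp_add]; ring_nf

theorem exp_concentration_of_gen_function_general
    (d : ℕ → ℕ) (X : ∀ N, Matrix (Fin (d N)) (Fin (d N)) ℂ)
    (hherm : ∀ N, (X N).IsHermitian)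
    (σ : ∀ N, Matrix (Fin (d N)) (Fin (d N)) ℂ) (hσ : ∀ N, IsDensity (σ N))
    (I : Set ℝ) (hI : IsOpen I) (hI0 : (0 : ℝ) ∈ I) (ψ : ℝ → ℝ)
    (hψ : ∀ t ∈ I, Filter.Tendsto
      (fun N : ℕ => (N : ℝ)⁻¹ *
        Real.log ((expVal (σ N) (NormedSpace.exp ((t * N) • X N))).re))
      Filter.atTop (nhds (ψ t)))
    (x : ℝ) (hderiv : HasDerivAt ψ x 0) :
    ∀ δ > (0:ℝ), ∃ C > (0:ℝ), ∃ N₀ : ℕ, ∀ N > N₀,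
      (expVal (σ N) (specProj ((Set.Ioo (x - δ) (x + δ))ᶜ) (X N))).re
        ≤ Real.exp (-C * N) := by
  intro δ hδ
  have hψ0 : ψ 0 = 0 := by
    refine tendsto_nhds_unique (hψ 0 hI0) (tendsto_const_nhds.congr fun N => ?_)
    simp [expVal, (hσ N).2]
  obtain ⟨t, ht, htI, hmtI, hψt, hψmt⟩ :=
    hderiv.exists_pos_lt_of_mem_nhds_zero (hI.mem_nhds hI0) (half_pos hδ)
  rw [hψ0, zero_add] at hψt hψmt
  have hup := (hψ t htI).eventually_lt_const hψt
  have hdown := (hψ (-t) hmtI).eventually_lt_const hψmt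
  refine ⟨t * δ / 4, by positivity, ?_⟩
  obtain ⟨N₀, hN₀⟩ := eventually_atTop.mp (hup.and (hdown.and
    ((eventually_two_mul_exp_le (by positivity : 0 < t * δ / 4)).and (eventually_gt_atTop 0))))
  refine ⟨N₀, fun N hN => ?_⟩
  obtain ⟨hupN, hdownN, htwo, hNpos⟩ := hN₀ N hN.le
  have hN : (0 : ℝ) < N := Nat.cast_pos.mpr hNpos
  calc _ ≤ exp (-(t * N * (x + δ))) * (expVal (σ N) (NormedSpace.exp ((t * N) • X N))).re +
        exp (t * N * (x - δ)) * (expVal (σ N) (NormedSpace.exp ((-t * N) • X N))).re := by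
        rw [neg_mul]
        exact expVal_specProj_compl_Ioo_le (hσ N).1 (hherm N) (by positivity) _ _
    _ ≤ exp (-(t * N * (x + δ))) * exp (N * (t * (x + δ / 2))) +
        exp (t * N * (x - δ)) * exp (N * (t * (δ / 2 - x))) := by
        gcongr
        · exact le_exp_mul_of_inv_mul_log_lt hN hupN
        · exact le_exp_mul_of_inv_mul_log_lt hN hdownN
    _ = 2 * exp (-(2 * (t * δ / 4)) * N) := by
        rw [← exp_add, ← exp_add]
        ring_nf
    _ ≤ exp (-(t * δ / 4) * N) := htwo

/-- If the cumulant generating functions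
`(1/N) log ω^N(e^{tN X^N})` converge on an open interval around `0` to a function `ψ`
differentiable at `0` with `ψ'(0) = x`, then `(ω^N)` concentrates exponentially at `x`. -/
theorem exp_concentration_of_gen_function
    (d : ℕ → ℕ) (X : ∀ N, Matrix (Fin (d N)) (Fin (d N)) ℂ)
    (hherm : ∀ N, (X N).IsHermitian) (hbdd : ∃ C : ℝ, ∀ N, ‖X N‖ ≤ C)
    (σ : ∀ N, Matrix (Fin (d N)) (Fin (d N)) ℂ) (hσ : ∀ N, IsDensity (σ N))
    (I : Set ℝ) (hI : IsOpen I) (hI0 : (0 : ℝ) ∈ I) (ψ : ℝ → ℝ)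
    (hψ : ∀ t ∈ I, Filter.Tendsto
      (fun N : ℕ => (N : ℝ)⁻¹ *
        Real.log ((expVal (σ N) (NormedSpace.exp ((t * N) • X N))).re))
      Filter.atTop (nhds (ψ t)))
    (x : ℝ) (hderiv : HasDerivAt ψ x 0) :
    ∀ δ > (0:ℝ), ∃ C > (0:ℝ), ∃ N₀ : ℕ, ∀ N > N₀,
      (expVal (σ N) (specProj ((Set.Ioo (x - δ) (x + δ))ᶜ) (X N))).re
        ≤ Real.exp (-C * N) :=
  exp_concentration_of_gen_function_general d X hherm σ hσ I hI hI0 ψ hψ x hderiv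
end

section
/- Let σ be a density matrix and H a Hermitian matrix on ℂ^d. Then −Tr(σ log σ) + Tr(σ H) ≤ log Tr(e^H), with equality if and only if σ = e^H / Tr(e^H). -/
open scoped Matrix Matrix.Norms.L2Operator ComplexOrder

/-!
Diagonalize `σ = ∑ pᵢ |uᵢ⟩⟨uᵢ|` and `H = ∑ hⱼ |vⱼ⟩⟨vⱼ|`. The overlaps `Mᵢⱼ = |⟨uᵢ, vⱼ⟩|²` form a
doubly stochastic matrix, and with the Gibbs weights `tⱼ = e^{hⱼ} / Z`, `Z = ∑ e^{hⱼ}`, one gets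
Klein's identity `log Z - S(σ) - Tr(σ H) = ∑ᵢⱼ Mᵢⱼ tⱼ klFun (pᵢ / tⱼ)`, where
`klFun x = x log x + 1 - x` is nonnegative and vanishes only at `x = 1`. Equality therefore forces
`pᵢ = tⱼ` whenever `⟨uᵢ, vⱼ⟩ ≠ 0`, which says exactly that `σ` and `e^H / Z` coincide.
-/

open Real Finset InformationTheory Unitary
open Complex (normSq)

lemma mul_klFun_div {p t : ℝ} (hp : 0 ≤ p) (ht : 0 < t) :
    t * klFun (p / t) = t - p - p * (log t - log p) := by
  rcases hp.eq_or_lt with rfl | hp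
  · simp [klFun_zero]
  · rw [klFun_apply, log_div hp.ne' ht.ne']
    field_simp
    ring

lemma mul_klFun_div_nonneg {p t : ℝ} (hp : 0 ≤ p) (ht : 0 < t) : 0 ≤ t * klFun (p / t) :=
  mul_nonneg ht.le (klFun_nonneg (div_nonneg hp ht.le))

section DoublyStochastic

variable {n : Type*} [Fintype n] [DecidableEq n] {M : Matrix n n ℝ} {p t : n → ℝ}

lemma sum_sub_sum_sub_sum_sum_mul_log_eq (hM : M ∈ doublyStochastic ℝ n)
    (hp : ∀ i, 0 ≤ p i) (ht : ∀ j, 0 < t j) :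
    ∑ j, t j - ∑ i, p i - ∑ i, ∑ j, M i j * (p i * (log (t j) - log (p i))) =
      ∑ i, ∑ j, M i j * (t j * klFun (p i / t j)) := by
  have hcol : ∑ i, ∑ j, M i j * t j = ∑ j, t j := by
    rw [sum_comm]
    simp_rw [← sum_mul, sum_col_of_mem_doublyStochastic hM, one_mul]
  have hrow : ∑ i, ∑ j, M i j * p i = ∑ i, p i := by
    simp_rw [← sum_mul, sum_row_of_mem_doublyStochastic hM, one_mul]
  simp_rw [mul_klFun_div (hp _) (ht _), mul_sub, sum_sub_distrib, hcol, hrow]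

lemma sum_sum_mul_log_le_of_mem_doublyStochastic (hM : M ∈ doublyStochastic ℝ n)
    (hp : ∀ i, 0 ≤ p i) (ht : ∀ j, 0 < t j) :
    ∑ i, ∑ j, M i j * (p i * (log (t j) - log (p i))) ≤ ∑ j, t j - ∑ i, p i := by
  rw [← sub_nonneg, sum_sub_sum_sub_sum_sum_mul_log_eq hM hp ht]
  exact sum_nonneg fun i _ ↦ sum_nonneg fun j _ ↦
    mul_nonneg (hM.1 i j) (mul_klFun_div_nonneg (hp i) (ht j))

lemma sum_sum_mul_log_eq_iff_of_mem_doublyStochastic (hM : M ∈ doublyStochastic ℝ n)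
    (hp : ∀ i, 0 ≤ p i) (ht : ∀ j, 0 < t j) :
    ∑ i, ∑ j, M i j * (p i * (log (t j) - log (p i))) = ∑ j, t j - ∑ i, p i ↔
      ∀ i j, M i j = 0 ∨ p i = t j := by
  have hterm (i j) : 0 ≤ M i j * (t j * klFun (p i / t j)) :=
    mul_nonneg (hM.1 i j) (mul_klFun_div_nonneg (hp i) (ht j))
  rw [eq_comm, ← sub_eq_zero, sum_sub_sum_sub_sum_sum_mul_log_eq hM hp ht,
    sum_eq_zero_iff_of_nonneg fun i _ ↦ sum_nonneg fun j _ ↦ hterm i j]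
  simp_rw [sum_eq_zero_iff_of_nonneg fun j _ ↦ hterm _ j, mem_univ, true_implies, mul_eq_zero,
    (ht _).ne', false_or, klFun_eq_zero_iff (div_nonneg (hp _) (ht _).le),
    div_eq_one_iff_eq (ht _).ne']

lemma sum_sum_mul_log_div_sum_exp_eq (hM : M ∈ doublyStochastic ℝ n) (hp1 : ∑ i, p i = 1)
    (h : n → ℝ) (hZ : 0 < ∑ k, exp (h k)) :
    ∑ i, ∑ j, M i j * (p i * (log (exp (h j) / ∑ k, exp (h k)) - log (p i))) =
      -∑ i, p i * log (p i) + ∑ i, ∑ j, M i j * p i * h j - log (∑ k, exp (h k)) := by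
  set Z := ∑ k, exp (h k)
  have hrow (i) : ∑ j, M i j * (p i * (log (exp (h j) / Z) - log (p i))) =
      ∑ j, M i j * p i * h j - p i * log Z - p i * log (p i) := by
    simp_rw [log_div (exp_pos _).ne' hZ.ne', log_exp, show ∀ j, M i j * (p i * (h j - log Z -
      log (p i))) = M i j * p i * h j - M i j * (p i * (log Z + log (p i))) from fun j ↦ by ring]
    rw [sum_sub_distrib, ← sum_mul, sum_row_of_mem_doublyStochastic hM]
    ring
  simp_rw [hrow, sum_sub_distrib, ← sum_mul, hp1]
  ring

theorem gibbs_le_log_sum_exp_of_mem_doublyStochastic (hM : M ∈ doublyStochastic ℝ n)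
    (hp : ∀ i, 0 ≤ p i) (hp1 : ∑ i, p i = 1) (h : n → ℝ) :
    -∑ i, p i * log (p i) + ∑ i, ∑ j, M i j * p i * h j ≤ log (∑ k, exp (h k)) ∧
      (-∑ i, p i * log (p i) + ∑ i, ∑ j, M i j * p i * h j = log (∑ k, exp (h k)) ↔
        ∀ i j, M i j = 0 ∨ p i = exp (h j) / ∑ k, exp (h k)) := by
  have hne : (univ : Finset n).Nonempty := nonempty_of_sum_ne_zero (f := p) (by simp [hp1])
  have hZ : 0 < ∑ k, exp (h k) := sum_pos (fun k _ ↦ exp_pos _) hne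
  have ht (j) : 0 < exp (h j) / ∑ k, exp (h k) := div_pos (exp_pos _) hZ
  have ht1 : ∑ j, exp (h j) / ∑ k, exp (h k) = 1 := by rw [← sum_div, div_self hZ.ne']
  have hle := sum_sum_mul_log_le_of_mem_doublyStochastic hM hp ht
  have heq := sum_sum_mul_log_eq_iff_of_mem_doublyStochastic hM hp ht
  rw [sum_sum_mul_log_div_sum_exp_eq hM hp1 h hZ, ht1, hp1, sub_self] at hle heq
  exact ⟨by linarith, by rw [← heq, sub_eq_zero]⟩

end DoublyStochastic

lemma Unitary.mul_mul_star_eq_mul_mul_star_iff {R : Type*} [Monoid R] [StarMul R]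
    (u v : unitary R) (a b : R) :
    (u : R) * a * star (u : R) = v * b * star (v : R) ↔
      a * ↑(star u * v) = ↑(star u * v) * b := by
  simp only [Submonoid.coe_mul, coe_star]
  constructor
  · intro h
    calc a * (star (u : R) * v)
        = star (u : R) * (u * a * star (u : R)) * v := by
          simp only [mul_assoc, star_mul_self_of_mem u.2, ← mul_assoc _ (u : R), one_mul]
      _ = star (u : R) * v * b := by
          rw [h]
          simp only [mul_assoc, star_mul_self_of_mem v.2, mul_one]
  · intro h
    calc (u : R) * a * star (u : R)
        = u * (a * (star (u : R) * v)) * star (v : R) := by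
          simp only [mul_assoc, mul_star_self_of_mem v.2, mul_one]
      _ = v * b * star (v : R) := by
          rw [h]
          simp only [← mul_assoc, mul_star_self_of_mem u.2, one_mul]

namespace Matrix

variable {n : Type*} [Fintype n] [DecidableEq n]

lemma normSq_mem_doublyStochastic (W : unitaryGroup n ℂ) :
    of (fun i j ↦ normSq ((W : Matrix n n ℂ) i j)) ∈ doublyStochastic ℝ n := by
  refine mem_doublyStochastic_iff_sum.mpr
    ⟨fun i j ↦ Complex.normSq_nonneg _, fun i ↦ ?_, fun j ↦ ?_⟩
  · have h := ext_iff.mpr (mul_star_self_of_mem W.2) i i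
    simp only [mul_apply, star_apply, Complex.star_def, Complex.mul_conj, one_apply_eq] at h
    exact_mod_cast h
  · have h := ext_iff.mpr (star_mul_self_of_mem W.2) j j
    simp only [mul_apply, star_apply, Complex.star_def, ← Complex.normSq_eq_conj_mul_self,
      one_apply_eq] at h
    exact_mod_cast h

lemma trace_conjStarAlgAut (U : unitaryGroup n ℂ) (A : Matrix n n ℂ) :
    (conjStarAlgAut ℂ _ U A).trace = A.trace := by
  rw [conjStarAlgAut_apply, trace_mul_cycle, coe_star_mul_self, one_mul]

lemma conj_diagonal_eq_conj_diagonal_iff (U V : unitaryGroup n ℂ) (a b : n → ℂ) :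
    conjStarAlgAut ℂ _ U (diagonal a) = conjStarAlgAut ℂ _ V (diagonal b) ↔
      ∀ i j, (star U * V : unitaryGroup n ℂ) i j = 0 ∨ a i = b j := by
  rw [conjStarAlgAut_apply, conjStarAlgAut_apply, mul_mul_star_eq_mul_mul_star_iff,
    ← Matrix.ext_iff]
  simp only [diagonal_mul, mul_diagonal]
  refine forall₂_congr fun i j ↦ ?_
  rw [mul_comm, ← sub_eq_zero, ← mul_sub, mul_eq_zero, sub_eq_zero]

lemma IsHermitian.exp_eq_cfc {A : Matrix n n ℂ} (hA : A.IsHermitian) :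
    NormedSpace.exp A = hA.cfc Real.exp := by
  have hconj := exp_units_conj (toUnits hA.eigenvectorUnitary)
    (diagonal (RCLike.ofReal ∘ hA.eigenvalues))
  simp only [Unitary.val_toUnits_apply, val_inv_toUnits_apply, ← Unitary.star_eq_inv,
    Unitary.coe_star] at hconj
  conv_lhs => rw [hA.spectral_theorem]
  rw [IsHermitian.cfc, conjStarAlgAut_apply, conjStarAlgAut_apply, hconj, exp_diagonal]
  congr
  funext i
  simp [← Complex.exp_eq_exp_ℂ, Complex.ofReal_exp]

lemma IsHermitian.trace_mul {A B : Matrix n n ℂ} (hA : A.IsHermitian) (hB : B.IsHermitian) :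
    (A * B).trace = ↑(∑ i, ∑ j,
      normSq ((star hA.eigenvectorUnitary * hB.eigenvectorUnitary : unitaryGroup n ℂ) i j) *
        hA.eigenvalues i * hB.eigenvalues j) := by
  set W : Matrix n n ℂ :=
    ((star hA.eigenvectorUnitary * hB.eigenvectorUnitary : unitaryGroup n ℂ) : Matrix n n ℂ)
  have hconj : A * B = conjStarAlgAut ℂ _ hA.eigenvectorUnitary
      (diagonal (RCLike.ofReal ∘ hA.eigenvalues) * W * diagonal (RCLike.ofReal ∘ hB.eigenvalues) *
        star W) := by
    conv_lhs => rw [hA.spectral_theorem, hB.spectral_theorem]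
    simp only [conjStarAlgAut_apply, W, star_mul, star_star, mul_assoc, coe_star,
      Submonoid.coe_mul, mul_star_self_of_mem hA.eigenvectorUnitary.2, mul_one]
  rw [hconj, trace_conjStarAlgAut]
  simp only [trace, diag_apply, mul_apply, star_apply, Complex.star_def, diagonal_apply,
    Function.comp_apply, RCLike.ofReal_eq_complex_ofReal, ite_mul, zero_mul, mul_ite, mul_zero,
    sum_ite_eq, sum_ite_eq', mem_univ, if_true]
  push_cast
  refine sum_congr rfl fun i _ ↦ sum_congr rfl fun j _ ↦ ?_
  rw [Complex.normSq_eq_conj_mul_self]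
  ring

lemma IsHermitian.trace_exp {A : Matrix n n ℂ} (hA : A.IsHermitian) :
    (NormedSpace.exp A).trace = ((∑ j, Real.exp (hA.eigenvalues j) : ℝ) : ℂ) := by
  rw [hA.exp_eq_cfc, IsHermitian.cfc, trace_conjStarAlgAut, trace_diagonal, Complex.ofReal_sum]
  rfl

lemma IsHermitian.inv_trace_exp_smul_exp {A : Matrix n n ℂ} (hA : A.IsHermitian) :
    (NormedSpace.exp A).trace⁻¹ • NormedSpace.exp A = conjStarAlgAut ℂ _ hA.eigenvectorUnitary
      (diagonal (RCLike.ofReal ∘ fun j ↦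
        Real.exp (hA.eigenvalues j) / ∑ k, Real.exp (hA.eigenvalues k))) := by
  rw [hA.trace_exp, hA.exp_eq_cfc, IsHermitian.cfc, ← map_smul, ← diagonal_smul]
  congr
  funext j
  simp [div_eq_inv_mul]

end Matrix

open Matrix in
lemma vnEntropy_eq_neg_sum_mul_log {d : ℕ} {σ : Matrix (Fin d) (Fin d) ℂ} (hσ : σ.IsHermitian) :
    vnEntropy σ = -∑ i, hσ.eigenvalues i * log (hσ.eigenvalues i) := by
  rw [vnEntropy, fc, dif_pos hσ]
  conv_lhs => enter [1, 1, 1, 1]; rw [hσ.spectral_theorem]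
  rw [IsHermitian.cfc, ← map_mul, trace_conjStarAlgAut, diagonal_mul_diagonal, trace_diagonal]
  simp

open Matrix Complex in
/-- Gibbs variational principle: for a density matrix `σ` and
Hermitian `H`, `−Tr(σ log σ) + Tr(σ H) ≤ log Tr(e^H)`, with equality if and only if
`σ = e^H / Tr(e^H)`. -/
theorem gibbs_variational_principle {d : ℕ} (σ H : Matrix (Fin d) (Fin d) ℂ)
    (hσ : IsDensity σ) (hH : H.IsHermitian) :
    vnEntropy σ + (expVal σ H).re ≤ Real.log ((NormedSpace.exp H).trace.re) ∧
    (vnEntropy σ + (expVal σ H).re = Real.log ((NormedSpace.exp H).trace.re) ↔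
      σ = ((NormedSpace.exp H).trace)⁻¹ • NormedSpace.exp H) := by
  obtain ⟨hσpsd, hσtr⟩ := hσ
  have hσh : σ.IsHermitian := hσpsd.isHermitian
  have hp : ∀ i, 0 ≤ hσh.eigenvalues i := hσpsd.eigenvalues_nonneg
  have hp1 : ∑ i, hσh.eigenvalues i = 1 :=
    ofReal_eq_one.mp (by rw [ofReal_sum, ← hσtr, hσh.trace_eq_sum_eigenvalues]; rfl)
  obtain ⟨hle, heq⟩ := gibbs_le_log_sum_exp_of_mem_doublyStochastic
    (normSq_mem_doublyStochastic (star hσh.eigenvectorUnitary * hH.eigenvectorUnitary)) hp hp1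
    hH.eigenvalues
  rw [hH.inv_trace_exp_smul_exp, vnEntropy_eq_neg_sum_mul_log hσh, expVal, hσh.trace_mul hH,
    hH.trace_exp, ofReal_re, ofReal_re]
  refine ⟨hle, heq.trans ?_⟩
  conv_rhs => rw [hσh.spectral_theorem]
  rw [conj_diagonal_eq_conj_diagonal_iff]
  simp only [of_apply, normSq_eq_zero, Function.comp_apply, RCLike.ofReal_inj]
end
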